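/- arXiv:2209.08427 — 4 statements merged into one kernel-verified Lean document; each statement's English description precedes it below -/
import Mathlib

section
/- Let p ∈ ℝ^d with 1 ≤ |p| ≤ r and let V be the ball of radius 1/2 around p. Then the set of points on the unit sphere visible from some point of V at distance ≥ 1 from the origin has normalized measure at most e^{−d/(8r²)}. -/
open scoped RealInnerProductSpace
open MeasureTheory
open scoped ENNReal Pointwise

/-- Let `p` with `1 ≤ ‖p‖ ≤ r`, and let `V` be the closed ball of radius `1/2`
around `p`. The set of points of the unit sphere visible from some point of `V`
of norm `≥ 1` has normalized surface measure at most `exp (-d / (8 r^2))`. -/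
theorem stmt7 (d : ℕ) (hd : 1 ≤ d) (p : EuclideanSpace ℝ (Fin d)) (r : ℝ)
    (hp : 1 ≤ ‖p‖) (hpr : ‖p‖ ≤ r) :
    (volume : Measure (EuclideanSpace ℝ (Fin d))).toSphere
        {q : Metric.sphere (0 : EuclideanSpace ℝ (Fin d)) 1 |
          ∃ x ∈ Metric.closedBall p (1 / 2), 1 ≤ ‖x‖ ∧
            1 ≤ ⟪x, (q : EuclideanSpace ℝ (Fin d))⟫} ≤
      ENNReal.ofReal (Real.exp (-(d : ℝ) / (8 * r ^ 2))) *
        (volume : Measure (EuclideanSpace ℝ (Fin d))).toSphere Set.univ := by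
  have hs0 : (0:ℝ) < ‖p‖ := lt_of_lt_of_le one_pos hp
  have hr0 : (0:ℝ) < r := lt_of_lt_of_le (lt_of_lt_of_le one_pos hp) hpr
  set t : ℝ := 1 / (2 * ‖p‖) with ht
  have ht0 : 0 < t := by positivity
  have ht12 : t ≤ 1 / 2 := by
    rw [ht]
    apply div_le_div_of_nonneg_left one_pos.le two_pos
    linarith
  have ht2 : t ^ 2 ≤ 1 / 4 := by nlinarith
  have htsq : t ^ 2 = 1 / (4 * ‖p‖ ^ 2) := by
    rw [ht]; field_simp; ring
  -- the cap
  set C : Set (Metric.sphere (0 : EuclideanSpace ℝ (Fin d)) 1) :=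
    {q | 1 / 2 ≤ ⟪p, (q : EuclideanSpace ℝ (Fin d))⟫} with hC
  have hclosed : IsClosed {y : EuclideanSpace ℝ (Fin d) | 1 / 2 ≤ ⟪p, y⟫} :=
    isClosed_le continuous_const (Continuous.inner continuous_const continuous_id)
  have hCmeas : MeasurableSet C :=
    (hclosed.preimage continuous_subtype_val).measurableSet
  -- visible set is contained in the cap
  have hsub : {q : Metric.sphere (0 : EuclideanSpace ℝ (Fin d)) 1 |
          ∃ x ∈ Metric.closedBall p (1 / 2), 1 ≤ ‖x‖ ∧
            1 ≤ ⟪x, (q : EuclideanSpace ℝ (Fin d))⟫} ⊆ C := by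
    rintro q ⟨x, hx, -, hxq⟩
    have hq1 : ‖(q : EuclideanSpace ℝ (Fin d))‖ = 1 := norm_eq_of_mem_sphere q
    have hiner : |⟪x - p, (q : EuclideanSpace ℝ (Fin d))⟫| ≤ 1 / 2 := by
      calc |⟪x - p, (q : EuclideanSpace ℝ (Fin d))⟫| ≤ ‖x - p‖ * ‖(q : EuclideanSpace ℝ (Fin d))‖ :=
            abs_real_inner_le_norm _ _
        _ ≤ 1 / 2 := by
            rw [hq1, mul_one]
            rw [Metric.mem_closedBall, dist_eq_norm] at hx
            exact hx
    have := abs_le.1 hiner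
    have hsplit : ⟪p, (q : EuclideanSpace ℝ (Fin d))⟫ =
        ⟪x, (q : EuclideanSpace ℝ (Fin d))⟫ - ⟪x - p, (q : EuclideanSpace ℝ (Fin d))⟫ := by
      rw [inner_sub_left]; ring
    simp only [hC, Set.mem_setOf_eq, hsplit]
    linarith [this.2]
  -- center and radius of the enclosing ball
  set b : EuclideanSpace ℝ (Fin d) := (1 / (2 * ‖p‖ ^ 2)) • p with hb
  set R : ℝ := Real.sqrt (1 - t ^ 2) with hR
  have h1t : (0:ℝ) ≤ 1 - t ^ 2 := by linarith
  have hR0 : 0 ≤ R := Real.sqrt_nonneg _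
  -- the cone over the cap is contained in the ball of radius R around b
  have hcone : Set.Ioo (0:ℝ) 1 • (Subtype.val '' C) ⊆ Metric.closedBall b R := by
    rintro y hy
    rcases Set.mem_smul.1 hy with ⟨c, hc, v, hv, rfl⟩
    rcases hv with ⟨q, hq, rfl⟩
    have hq1 : ‖(q : EuclideanSpace ℝ (Fin d))‖ = 1 := norm_eq_of_mem_sphere q
    have hqp : 1 / 2 ≤ ⟪p, (q : EuclideanSpace ℝ (Fin d))⟫ := hq
    have hc0 : 0 < c := hc.1
    have hc1 : c < 1 := hc.2
    have hnormsq : ‖c • (q : EuclideanSpace ℝ (Fin d)) - b‖ ^ 2 ≤ 1 - t ^ 2 := by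
      have e1 : ‖c • (q : EuclideanSpace ℝ (Fin d)) - b‖ ^ 2 =
          ‖c • (q : EuclideanSpace ℝ (Fin d))‖ ^ 2
            - 2 * ⟪c • (q : EuclideanSpace ℝ (Fin d)), b⟫ + ‖b‖ ^ 2 :=
        norm_sub_sq_real _ _
      have e2 : ‖c • (q : EuclideanSpace ℝ (Fin d))‖ ^ 2 = c ^ 2 := by
        rw [norm_smul, hq1, mul_one, Real.norm_eq_abs, sq_abs]
      have e3 : ‖b‖ ^ 2 = t ^ 2 := by
        rw [hb, norm_smul, Real.norm_eq_abs, mul_pow, sq_abs, htsq]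
        rw [div_pow, one_pow, mul_pow]
        field_simp
        ring
      have e4 : ⟪c • (q : EuclideanSpace ℝ (Fin d)), b⟫ =
          c * (1 / (2 * ‖p‖ ^ 2)) * ⟪p, (q : EuclideanSpace ℝ (Fin d))⟫ := by
        rw [hb, real_inner_smul_left, real_inner_smul_right, real_inner_comm]
        ring
      have e5 : c * t ^ 2 ≤ ⟪c • (q : EuclideanSpace ℝ (Fin d)), b⟫ := by
        rw [e4, htsq]
        have hpos : 0 < 1 / (2 * ‖p‖ ^ 2) := by positivity
        have : c * (1 / (2 * ‖p‖ ^ 2)) * (1/2) ≤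
            c * (1 / (2 * ‖p‖ ^ 2)) * ⟪p, (q : EuclideanSpace ℝ (Fin d))⟫ := by
          apply mul_le_mul_of_nonneg_left hqp (by positivity)
        calc c * (1 / (4 * ‖p‖ ^ 2)) = c * (1 / (2 * ‖p‖ ^ 2)) * (1/2) := by ring
          _ ≤ _ := this
      rw [e1, e2, e3]
      nlinarith
    rw [Metric.mem_closedBall, dist_eq_norm, hR]
    have := Real.sqrt_le_sqrt hnormsq
    rwa [Real.sqrt_sq (norm_nonneg _)] at this
  -- the key analytic bound
  have hRd : R ^ d ≤ Real.exp (-(d : ℝ) / (8 * r ^ 2)) := by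
    have h1 : R ≤ Real.exp (-(t ^ 2) / 2) := by
      have : (1 : ℝ) - t ^ 2 ≤ Real.exp (-(t ^ 2) / 2) ^ 2 := by
        rw [← Real.exp_nat_mul]
        have : (-(t^2)) + 1 ≤ Real.exp (-(t^2)) := Real.add_one_le_exp _
        calc (1:ℝ) - t ^ 2 ≤ Real.exp (-(t^2)) := by linarith
          _ = Real.exp ((2:ℕ) * (-(t ^ 2) / 2)) := by
              congr 1
              push_cast
              ring
      rw [hR]
      calc Real.sqrt (1 - t ^ 2) ≤ Real.sqrt (Real.exp (-(t ^ 2) / 2) ^ 2) :=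
            Real.sqrt_le_sqrt this
        _ = Real.exp (-(t ^ 2) / 2) := Real.sqrt_sq (Real.exp_nonneg _)
    calc R ^ d ≤ Real.exp (-(t ^ 2) / 2) ^ d := pow_le_pow_left₀ hR0 h1 d
      _ = Real.exp ((d : ℝ) * (-(t ^ 2) / 2)) := (Real.exp_nat_mul _ d).symm
      _ ≤ Real.exp (-(d : ℝ) / (8 * r ^ 2)) := by
          apply Real.exp_le_exp.2
          rw [htsq]
          have h8 : (0:ℝ) < 8 * ‖p‖ ^ 2 := by positivity
          have hle : 8 * ‖p‖ ^ 2 ≤ 8 * r ^ 2 := by nlinarith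
          have key : (d : ℝ) / (8 * r ^ 2) ≤ (d : ℝ) / (8 * ‖p‖ ^ 2) :=
            div_le_div_of_nonneg_left (Nat.cast_nonneg d) h8 hle
          have heq : (d : ℝ) * (-(1 / (4 * ‖p‖ ^ 2)) / 2) = -((d:ℝ) / (8 * ‖p‖ ^ 2)) := by
            have ha : ‖p‖ ≠ 0 := hs0.ne'
            field_simp
            ring
          rw [heq, neg_div]
          linarith
  -- dimension
  have hdim : Module.finrank ℝ (EuclideanSpace ℝ (Fin d)) = d := finrank_euclideanSpace_fin
  calc (volume : Measure (EuclideanSpace ℝ (Fin d))).toSphere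
        {q : Metric.sphere (0 : EuclideanSpace ℝ (Fin d)) 1 |
          ∃ x ∈ Metric.closedBall p (1 / 2), 1 ≤ ‖x‖ ∧
            1 ≤ ⟪x, (q : EuclideanSpace ℝ (Fin d))⟫}
      ≤ (volume : Measure (EuclideanSpace ℝ (Fin d))).toSphere C := measure_mono hsub
    _ = (d : ℝ≥0∞) * volume (Set.Ioo (0:ℝ) 1 • (Subtype.val '' C)) := by
        rw [Measure.toSphere_apply' _ hCmeas, hdim]
    _ ≤ (d : ℝ≥0∞) * volume (Metric.closedBall b R) := by
        exact mul_le_mul_right (measure_mono hcone) _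
    _ = (d : ℝ≥0∞) * (ENNReal.ofReal (R ^ d) *
          volume (Metric.ball (0 : EuclideanSpace ℝ (Fin d)) 1)) := by
        rw [Measure.addHaar_closedBall _ _ hR0, hdim]
    _ ≤ (d : ℝ≥0∞) * (ENNReal.ofReal (Real.exp (-(d : ℝ) / (8 * r ^ 2))) *
          volume (Metric.ball (0 : EuclideanSpace ℝ (Fin d)) 1)) := by
        exact mul_le_mul_right (mul_le_mul_left (ENNReal.ofReal_le_ofReal hRd) _) _
    _ = ENNReal.ofReal (Real.exp (-(d : ℝ) / (8 * r ^ 2))) *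
          ((d : ℝ≥0∞) * volume (Metric.ball (0 : EuclideanSpace ℝ (Fin d)) 1)) := by
        ring
    _ = ENNReal.ofReal (Real.exp (-(d : ℝ) / (8 * r ^ 2))) *
        (volume : Measure (EuclideanSpace ℝ (Fin d))).toSphere Set.univ := by
        rw [Measure.toSphere_apply_univ, hdim]
end

section
/- Let P be a rectifiable path in ℝ^d of length L that stays within distance r ≥ 1 of the origin, such that every point of the unit sphere is visible from some point of P with norm ≥ 1. Then L ≥ e^{d/(8r²)} − 1. -/
/-!
The uniform measure on the sphere is replaced by the `2^d` sign directions `σ / √d`,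
`σ ∈ {-1, 1}^d`. Cut `[0, L]` into `⌊4L⌋ + 1` pieces of length `1/4`. The directions seen from
one piece are all seen at level `3/4` from a single path point `z` with `‖z‖ ≤ r`, i.e. they
satisfy `∑ σᵢ zᵢ ≥ (3/4) √d`, and Hoeffding's inequality bounds their number by
`2^d e^{-9d/(32r²)}`. Hence `e^{9d/(32r²)} ≤ 4L + 1`, which yields `E - 1 ≤ L` for
`E = e^{d/(8r²)} ≥ 3`; for smaller `E` it suffices that `L ≥ 2`, as two antipodal directions show.
-/

open scoped RealInnerProductSpace
open Finset Real

section SignVectors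

variable {ι : Type*} [Fintype ι] [DecidableEq ι]

variable (ι) in
noncomputable def signVectors : Finset (ι → ℝ) :=
  Fintype.piFinset fun _ => {-1, 1}

lemma card_signVectors : #(signVectors ι) = 2 ^ Fintype.card ι := by
  simp [signVectors, Fintype.card_piFinset, card_pair (show (-1 : ℝ) ≠ 1 by norm_num)]

lemma sum_signVectors_exp_eq_prod_cosh (z : ι → ℝ) :
    ∑ σ ∈ signVectors ι, exp (∑ i, σ i * z i) = ∏ i, 2 * cosh (z i) := by
  simp_rw [exp_sum]
  rw [signVectors, sum_prod_piFinset _ fun i x => exp (x * z i)]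
  refine prod_congr rfl fun i _ => ?_
  rw [sum_pair (by norm_num), cosh_eq]
  ring_nf

lemma sum_signVectors_exp_le (z : ι → ℝ) :
    ∑ σ ∈ signVectors ι, exp (∑ i, σ i * z i)
      ≤ 2 ^ Fintype.card ι * exp ((∑ i, z i ^ 2) / 2) := by
  rw [sum_signVectors_exp_eq_prod_cosh, sum_div, exp_sum, ← card_univ, ← prod_const,
    ← prod_mul_distrib]
  gcongr with i
  exact cosh_le_exp_half_sq (z i)

/-- Hoeffding's inequality for a Rademacher sum `∑ σᵢ zᵢ`, in counting form. -/
lemma card_signVectors_filter_le_sum_mul_le (z : ι → ℝ) {s c : ℝ} (hs : 0 ≤ s)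
    (hz : ∑ i, z i ^ 2 ≤ c) :
    (#{σ ∈ signVectors ι | s ≤ ∑ i, σ i * z i} : ℝ)
      ≤ 2 ^ Fintype.card ι * exp (-(s ^ 2 / (2 * c))) := by
  have hc : 0 ≤ c := (sum_nonneg fun i _ => sq_nonneg (z i)).trans hz
  -- the minimiser of `t ↦ t² c / 2 - t s`
  set t := s / c
  have ht : 0 ≤ t := div_nonneg hs hc
  have hexponent : t ^ 2 * c / 2 - t * s = -(s ^ 2 / (2 * c)) := by
    rcases hc.eq_or_lt with rfl | hc
    · simp [t]
    · simp only [t]; field_simp; ring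
  calc (#{σ ∈ signVectors ι | s ≤ ∑ i, σ i * z i} : ℝ)
      ≤ ∑ σ ∈ signVectors ι with s ≤ ∑ i, σ i * z i, exp (t * (∑ i, σ i * z i) - t * s) := by
        rw [card_eq_sum_ones, Nat.cast_sum, Nat.cast_one]
        refine sum_le_sum fun σ hσ => one_le_exp ?_
        rw [← mul_sub]
        exact mul_nonneg ht (sub_nonneg.2 (mem_filter.1 hσ).2)
    _ ≤ ∑ σ ∈ signVectors ι, exp (t * (∑ i, σ i * z i) - t * s) :=
        sum_le_sum_of_subset_of_nonneg (filter_subset _ _) fun _ _ _ => (exp_pos _).le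
    _ = exp (-(t * s)) * ∑ σ ∈ signVectors ι, exp (∑ i, σ i * (t * z i)) := by
        rw [mul_sum]
        refine sum_congr rfl fun σ _ => ?_
        rw [← exp_add, mul_sum]
        ring_nf
    _ ≤ exp (-(t * s)) * (2 ^ Fintype.card ι * exp ((∑ i, (t * z i) ^ 2) / 2)) := by
        gcongr
        exact sum_signVectors_exp_le _
    _ ≤ exp (-(t * s)) * (2 ^ Fintype.card ι * exp (t ^ 2 * c / 2)) := by
        gcongr
        simp_rw [mul_pow, ← mul_sum]
        gcongr
    _ = 2 ^ Fintype.card ι * exp (-(s ^ 2 / (2 * c))) := by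
        rw [← hexponent, sub_eq_add_neg, exp_add]
        ring

end SignVectors

section SignDirections

variable {ι : Type*} [Fintype ι]

noncomputable def signDirection (σ : ι → ℝ) : EuclideanSpace ℝ ι :=
  (√(Fintype.card ι))⁻¹ • WithLp.toLp 2 σ

lemma inner_signDirection (z : EuclideanSpace ℝ ι) (σ : ι → ℝ) :
    ⟪z, signDirection σ⟫ = (∑ i, σ i * z i) / √(Fintype.card ι) := by
  rw [signDirection, inner_smul_right, PiLp.inner_apply, div_eq_inv_mul]
  simp

variable [DecidableEq ι]

lemma norm_signDirection [Nonempty ι] {σ : ι → ℝ} (hσ : σ ∈ signVectors ι) :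
    ‖signDirection σ‖ = 1 := by
  have hσ_sq : ∀ i, ‖σ i‖ ^ 2 = 1 := fun i => by
    have hσi := Fintype.mem_piFinset.1 hσ i
    simp only [mem_insert, mem_singleton] at hσi
    rcases hσi with h | h <;> simp [h]
  have hcard : (0 : ℝ) < Fintype.card ι := by exact_mod_cast Fintype.card_pos
  rw [signDirection, norm_smul, EuclideanSpace.norm_eq]
  simp only [hσ_sq, sum_const, card_univ, nsmul_eq_mul, mul_one, norm_inv,
    norm_of_nonneg (sqrt_nonneg _)]
  exact inv_mul_cancel₀ (sqrt_pos.2 hcard).ne'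

lemma card_signVectors_filter_le_inner_le [Nonempty ι] (z : EuclideanSpace ℝ ι) {a r : ℝ}
    (ha : 0 ≤ a) (hz : ‖z‖ ≤ r) :
    (#{σ ∈ signVectors ι | a ≤ ⟪z, signDirection σ⟫} : ℝ)
      ≤ 2 ^ Fintype.card ι * exp (-(a ^ 2 * Fintype.card ι / (2 * r ^ 2))) := by
  have hcard : (0 : ℝ) < √(Fintype.card ι) := sqrt_pos.2 (by exact_mod_cast Fintype.card_pos)
  have hz_sq : ∑ i, z i ^ 2 ≤ r ^ 2 := by
    rw [← EuclideanSpace.real_norm_sq_eq]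
    exact pow_le_pow_left₀ (norm_nonneg z) hz 2
  calc (#{σ ∈ signVectors ι | a ≤ ⟪z, signDirection σ⟫} : ℝ)
      ≤ #{σ ∈ signVectors ι | a * √(Fintype.card ι) ≤ ∑ i, σ i * z i} := by
        refine Nat.cast_le.2 (card_le_card fun σ hσ => ?_)
        rw [mem_filter, inner_signDirection, le_div_iff₀ hcard] at hσ
        exact mem_filter.2 hσ
    _ ≤ 2 ^ Fintype.card ι * exp (-((a * √(Fintype.card ι)) ^ 2 / (2 * r ^ 2))) :=
        card_signVectors_filter_le_sum_mul_le z (by positivity) hz_sq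
    _ = 2 ^ Fintype.card ι * exp (-(a ^ 2 * Fintype.card ι / (2 * r ^ 2))) := by
        rw [mul_pow, sq_sqrt (Nat.cast_nonneg _)]

end SignDirections

lemma sub_le_inner_of_dist_le {E : Type*} [NormedAddCommGroup E] [InnerProductSpace ℝ E]
    {u z q : E} {δ : ℝ} (hq : ‖q‖ = 1) (hu : 1 ≤ ⟪u, q⟫) (huz : dist u z ≤ δ) :
    1 - δ ≤ ⟪z, q⟫ := by
  have h : ⟪u - z, q⟫ ≤ δ := calc
    ⟪u - z, q⟫ ≤ ‖u - z‖ * ‖q‖ := real_inner_le_norm _ _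
    _ ≤ δ := by rwa [hq, mul_one, ← dist_eq_norm]
  rw [inner_sub_left] at h
  linarith

lemma card_le_of_card_floor_fiber_le {α : Type*} {V : Finset α} {f : α → ℝ} {L M : ℝ}
    (hL : 0 ≤ L) (hf : ∀ x ∈ V, f x ∈ Set.Icc 0 L)
    (hM : ∀ k : ℕ, (#{x ∈ V | ⌊f x⌋₊ = k} : ℝ) ≤ M) :
    (#V : ℝ) ≤ (L + 1) * M := by
  have hmaps : (V : Set α).MapsTo (fun x => ⌊f x⌋₊) (range (⌊L⌋₊ + 1)) := fun x hx => by
    simpa [Nat.lt_succ_iff] using Nat.floor_le_floor (hf x hx).2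
  have hM0 : 0 ≤ M := (Nat.cast_nonneg _).trans (hM 0)
  calc (#V : ℝ) = ∑ k ∈ range (⌊L⌋₊ + 1), (#{x ∈ V | ⌊f x⌋₊ = k} : ℝ) := by
        exact_mod_cast card_eq_sum_card_fiberwise hmaps
    _ ≤ (⌊L⌋₊ + 1 : ℕ) * M := by
        simpa using sum_le_card_nsmul (range (⌊L⌋₊ + 1)) _ M fun k _ => hM k
    _ ≤ (L + 1) * M := by
        gcongr
        push_cast
        linarith [Nat.floor_le hL]

lemma two_le_of_forall_visible {E : Type*} [NormedAddCommGroup E] [InnerProductSpace ℝ E]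
    [Nontrivial E] {L : ℝ} {P : ℝ → E} (hlip : LipschitzOnWith 1 P (Set.Icc 0 L))
    (hview : ∀ q : E, ‖q‖ = 1 → ∃ t ∈ Set.Icc 0 L, 1 ≤ ⟪P t, q⟫) : 2 ≤ L := by
  obtain ⟨q, hq⟩ := exists_norm_eq E zero_le_one
  obtain ⟨s, hs, hsq⟩ := hview q hq
  obtain ⟨t, ht, htq⟩ := hview (-q) (by rwa [norm_neg])
  rw [inner_neg_right] at htq
  calc 2 ≤ ⟪P s - P t, q⟫ := by rw [inner_sub_left]; linarith
    _ ≤ ‖P s - P t‖ := by simpa [hq] using real_inner_le_norm (P s - P t) q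
    _ ≤ dist s t := by simpa [dist_eq_norm] using hlip.dist_le_mul s hs t ht
    _ ≤ L := by simpa using Real.dist_le_of_mem_Icc hs ht

lemma exp_le_of_forall_signDirection_visible {ι : Type*} [Fintype ι] [DecidableEq ι]
    [Nonempty ι] {L r : ℝ} {P : ℝ → EuclideanSpace ℝ ι} (hL : 0 ≤ L)
    (hlip : LipschitzOnWith 1 P (Set.Icc 0 L))
    (hbound : ∀ t ∈ Set.Icc 0 L, ‖P t‖ ≤ r)
    (hview : ∀ σ ∈ signVectors ι, ∃ t ∈ Set.Icc 0 L, 1 ≤ ⟪P t, signDirection σ⟫) :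
    exp ((3 / 4) ^ 2 * Fintype.card ι / (2 * r ^ 2)) ≤ 4 * L + 1 := by
  set a := (3 / 4) ^ 2 * Fintype.card ι / (2 * r ^ 2)
  choose! t ht hvis using hview
  have hfiber (k : ℕ) :
      (#{σ ∈ signVectors ι | ⌊4 * t σ⌋₊ = k} : ℝ) ≤ 2 ^ Fintype.card ι * exp (-a) := by
    rcases eq_empty_or_nonempty {σ ∈ signVectors ι | ⌊4 * t σ⌋₊ = k} with hempty | ⟨σ₀, hσ₀⟩
    · rw [hempty, card_empty, Nat.cast_zero]
      positivity
    obtain ⟨hσ₀V, hσ₀k⟩ := mem_filter.1 hσ₀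
    refine le_trans (Nat.cast_le.2 (card_le_card fun σ hσ => ?_))
      (card_signVectors_filter_le_inner_le (P (t σ₀)) (by norm_num) (hbound _ (ht σ₀ hσ₀V)))
    obtain ⟨hσV, hσk⟩ := mem_filter.1 hσ
    have hfloor : ⌊4 * t σ⌋ = ⌊4 * t σ₀⌋ := by
      rw [← Int.natCast_floor_eq_floor (by linarith [(ht σ hσV).1]),
        ← Int.natCast_floor_eq_floor (by linarith [(ht σ₀ hσ₀V).1]), hσk, hσ₀k]
    have hdist : dist (P (t σ)) (P (t σ₀)) ≤ 1 / 4 := by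
      calc dist (P (t σ)) (P (t σ₀)) ≤ dist (t σ) (t σ₀) := by
            simpa using hlip.dist_le_mul _ (ht σ hσV) _ (ht σ₀ hσ₀V)
        _ ≤ 1 / 4 := by
            obtain ⟨hlo, hhi⟩ := abs_lt.1 (Int.abs_sub_lt_one_of_floor_eq_floor hfloor)
            rw [Real.dist_eq, abs_le]
            constructor <;> linarith
    refine mem_filter.2 ⟨hσV, ?_⟩
    linarith [sub_le_inner_of_dist_le (norm_signDirection hσV) (hvis σ hσV) hdist]
  have hcount := card_le_of_card_floor_fiber_le (V := signVectors ι) (f := fun σ => 4 * t σ)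
    (L := 4 * L) (by positivity)
    (fun σ hσ => ⟨by linarith [(ht σ hσ).1], by linarith [(ht σ hσ).2]⟩) hfiber
  rw [card_signVectors, Nat.cast_pow, Nat.cast_ofNat] at hcount
  have hone : 1 ≤ (4 * L + 1) * exp (-a) :=
    le_of_mul_le_mul_left (by linear_combination hcount)
      (by positivity : (0 : ℝ) < 2 ^ Fintype.card ι)
  rwa [exp_neg, ← div_eq_mul_inv, one_le_div (exp_pos a)] at hone

theorem stmt8_general (d : ℕ) (hd : 1 ≤ d) (L r : ℝ)
    (P : ℝ → EuclideanSpace ℝ (Fin d))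
    (hlip : LipschitzOnWith 1 P (Set.Icc 0 L))
    (hbound : ∀ t ∈ Set.Icc (0 : ℝ) L, ‖P t‖ ≤ r)
    (hview : ∀ q : EuclideanSpace ℝ (Fin d), ‖q‖ = 1 →
      ∃ t ∈ Set.Icc (0 : ℝ) L, 1 ≤ ‖P t‖ ∧ 1 ≤ ⟪P t, q⟫) :
    Real.exp ((d : ℝ) / (8 * r ^ 2)) - 1 ≤ L := by
  have : Nonempty (Fin d) := ⟨⟨0, hd⟩⟩
  have hvisible (q : EuclideanSpace ℝ (Fin d)) (hq : ‖q‖ = 1) :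
      ∃ t ∈ Set.Icc 0 L, 1 ≤ ⟪P t, q⟫ :=
    (hview q hq).imp fun _ ⟨ht, _, hinner⟩ => ⟨ht, hinner⟩
  have hL2 : 2 ≤ L := two_le_of_forall_visible hlip hvisible
  have hcover := exp_le_of_forall_signDirection_visible (by linarith) hlip hbound
    fun σ hσ => hvisible _ (norm_signDirection hσ)
  rw [Fintype.card_fin] at hcover
  set E := exp ((d : ℝ) / (8 * r ^ 2))
  have hE : E ^ 2 ≤ 4 * L + 1 := by
    refine le_trans ?_ hcover
    rw [← exp_nat_mul, exp_le_exp]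
    have : 0 ≤ (d : ℝ) / r ^ 2 := by positivity
    calc ((2 : ℕ) : ℝ) * (d / (8 * r ^ 2)) = 8 / 32 * (d / r ^ 2) := by push_cast; ring
      _ ≤ 9 / 32 * (d / r ^ 2) := by gcongr; norm_num
      _ = (3 / 4) ^ 2 * d / (2 * r ^ 2) := by ring
  have hE1 : 1 ≤ E := one_le_exp (by positivity)
  rcases le_or_gt E 3 with hE3 | hE3
  · linarith
  · nlinarith [mul_nonneg (sub_nonneg.2 hE1) (sub_nonneg.2 hE3.le)]

/-- If a 1-Lipschitz path `P : [0, L] → ℝ^d` stays within distance `r ≥ 1` of the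
origin and every point of the unit sphere is visible from some point of `P` of
norm `≥ 1`, then `L ≥ exp (d / (8 r^2)) - 1`. -/
theorem stmt8 (d : ℕ) (hd : 1 ≤ d) (L r : ℝ) (hL : 0 ≤ L) (hr : 1 ≤ r)
    (P : ℝ → EuclideanSpace ℝ (Fin d))
    (hlip : LipschitzOnWith 1 P (Set.Icc 0 L))
    (hbound : ∀ t ∈ Set.Icc (0 : ℝ) L, ‖P t‖ ≤ r)
    (hview : ∀ q : EuclideanSpace ℝ (Fin d), ‖q‖ = 1 →
      ∃ t ∈ Set.Icc (0 : ℝ) L, 1 ≤ ‖P t‖ ∧ 1 ≤ ⟪P t, q⟫) :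
    Real.exp ((d : ℝ) / (8 * r ^ 2)) - 1 ≤ L :=
  stmt8_general d hd L r P hlip hbound hview
end

section
/- A path P starting at the origin in ℝ^d intersects every hyperplane at distance exactly 1 from the origin if and only if every point of the unit sphere U is visible from some point of P; equivalently, iff U is contained in the convex hull of the image of P. -/
open scoped RealInnerProductSpace

/-!
Since `⟪P 0, q⟫ = 0`, the intermediate value theorem shows that the path meets `H_q` iff it
reaches the half-space `⟪·, q⟫ ≥ 1`, and for a unit `q` a point there has norm at least `1`.
The image `K` of the path is compact, hence so is its convex hull (Carathéodory). A unit vector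
outside that hull is strictly separated from it, and the unit normal `u` of the separating
hyperplane gives a half-space `⟪·, u⟫ ≥ 1` that misses `K`. Conversely, for a unit `q` in the
hull, the convex set `⟪·, q⟫ < 1` excludes `q`, so it cannot contain `K`.
-/

open Set

theorem exists_stdSimplex_fin_sum_smul_eq_of_card_le {𝕜 E ι : Type*} [Semiring 𝕜]
    [PartialOrder 𝕜] [AddCommMonoid E] [Module 𝕜 E] [Fintype ι] {n : ℕ}
    (hn : Fintype.card ι ≤ n) {s : Set E} {y : E} (hy : y ∈ s) {w : ι → 𝕜}
    (hw : w ∈ stdSimplex 𝕜 ι) {z : ι → E} (hz : ∀ i, z i ∈ s) :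
    ∃ w' ∈ stdSimplex 𝕜 (Fin n), ∃ z' : Fin n → E,
      (∀ j, z' j ∈ s) ∧ ∑ j, w' j • z' j = ∑ i, w i • z i := by
  obtain ⟨m, rfl⟩ := Nat.exists_eq_add_of_le hn
  let e : Fin (Fintype.card ι + m) ≃ ι ⊕ Fin m :=
    (Fintype.equivFinOfCardEq (by simp)).symm
  refine ⟨Sum.elim w 0 ∘ e, ⟨fun j => ?_, ?_⟩,
    Sum.elim z (fun _ => y) ∘ e, fun j => ?_, ?_⟩
  · simp only [Function.comp_apply]
    obtain i | i := e j
    exacts [hw.1 i, le_rfl]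
  · simpa [e.sum_comp (Sum.elim w 0)] using hw.2
  · simp only [Function.comp_apply]
    obtain i | i := e j
    exacts [hz i, hy]
  · simp [e.sum_comp (fun k => Sum.elim w 0 k • Sum.elim z (fun _ => y) k)]

theorem convexHull_eq_image_stdSimplex_fin {𝕜 E : Type*} [Field 𝕜] [LinearOrder 𝕜]
    [IsStrictOrderedRing 𝕜] [AddCommGroup E] [Module 𝕜 E] [FiniteDimensional 𝕜 E]
    (s : Set E) :
    convexHull 𝕜 s =
      (fun p : (Fin (Module.finrank 𝕜 E + 1) → 𝕜) × (Fin (Module.finrank 𝕜 E + 1) → E) =>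
        ∑ i, p.1 i • p.2 i) '' (stdSimplex 𝕜 _ ×ˢ univ.pi fun _ => s) := by
  refine Subset.antisymm (fun x hx => ?_) ?_
  · obtain ⟨ι, _, z, w, hzs, hindep, hwpos, hwsum, rfl⟩ :=
      eq_pos_convex_span_of_mem_convexHull hx
    obtain ⟨y, hy⟩ := (convexHull_nonempty_iff (𝕜 := 𝕜)).1 ⟨_, hx⟩
    have hcard : Fintype.card ι ≤ Module.finrank 𝕜 E + 1 :=
      hindep.card_le_finrank_succ.trans (Nat.add_le_add_right (Submodule.finrank_le _) 1)
    obtain ⟨w', hw', z', hz', heq⟩ :=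
      exists_stdSimplex_fin_sum_smul_eq_of_card_le hcard hy ⟨fun i => (hwpos i).le, hwsum⟩
        fun i => hzs (mem_range_self i)
    exact ⟨(w', z'), ⟨hw', fun j _ => hz' j⟩, heq⟩
  · rintro _ ⟨⟨w, z⟩, ⟨hw, hz⟩, rfl⟩
    exact (convex_convexHull 𝕜 s).sum_mem (fun i _ => hw.1 i) hw.2
      fun i _ => subset_convexHull 𝕜 s (hz i (mem_univ i))

theorem IsCompact.convexHull {E : Type*} [NormedAddCommGroup E] [NormedSpace ℝ E]
    [FiniteDimensional ℝ E] {s : Set E} (hs : IsCompact s) : IsCompact (convexHull ℝ s) := by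
  rw [_root_.convexHull_eq_image_stdSimplex_fin]
  exact ((isCompact_stdSimplex _ _).prod (isCompact_univ_pi fun _ => hs)).image <|
    continuous_finsetSum _ fun i _ =>
      ((continuous_apply i).comp continuous_fst).smul ((continuous_apply i).comp continuous_snd)

section InnerProductSpace

variable {E : Type*} [NormedAddCommGroup E] [InnerProductSpace ℝ E]

theorem one_le_norm_of_one_le_inner {y q : E} (hq : ‖q‖ = 1) (h : 1 ≤ ⟪y, q⟫) : 1 ≤ ‖y‖ := by
  simpa [hq] using h.trans (real_inner_le_norm y q)

theorem exists_unit_forall_inner_lt_one [CompleteSpace E] {C : Set E} (hconv : Convex ℝ C)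
    (hclosed : IsClosed C) {y₀ : E} (hy₀ : y₀ ∈ C) {x : E} (hx : ‖x‖ ≤ 1) (hxC : x ∉ C) :
    ∃ u : E, ‖u‖ = 1 ∧ ∀ y ∈ C, ⟪y, u⟫ < 1 := by
  obtain ⟨f, c, hfC, hfx⟩ := geometric_hahn_banach_closed_point hconv hclosed hxC
  set v := (InnerProductSpace.toDual ℝ E).symm f
  have hv : ∀ z, ⟪v, z⟫ = f z := fun z => InnerProductSpace.toDual_symm_apply
  have hfx_le : f x ≤ ‖v‖ := by
    rw [← hv]
    exact (real_inner_le_norm v x).trans (mul_le_of_le_one_right (norm_nonneg v) hx)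
  have hv0 : v ≠ 0 := by
    intro hvz
    have := (hfC y₀ hy₀).trans hfx
    simp [← hv, hvz] at this
  refine ⟨‖v‖⁻¹ • v, norm_smul_inv_norm hv0, fun z hz => ?_⟩
  rw [real_inner_smul_right, real_inner_comm, hv]
  calc ‖v‖⁻¹ * f z < ‖v‖⁻¹ * ‖v‖ :=
        mul_lt_mul_of_pos_left ((hfC z hz).trans (hfx.trans_le hfx_le)) (by positivity)
    _ = 1 := inv_mul_cancel₀ (norm_ne_zero_iff.2 hv0)

theorem sphere_subset_convexHull_iff [CompleteSpace E] {K : Set E}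
    (hK : IsClosed (convexHull ℝ K)) :
    Metric.sphere (0 : E) 1 ⊆ convexHull ℝ K ↔ ∀ q : E, ‖q‖ = 1 → ∃ y ∈ K, 1 ≤ ⟪y, q⟫ := by
  constructor
  · intro hsub q hq
    by_contra! h
    have hhalf : Convex ℝ {y : E | ⟪y, q⟫ < 1} :=
      convex_halfSpace_lt
        ⟨fun a b => inner_add_left a b q, fun r a => real_inner_smul_left a q r⟩ 1
    have hqq : ⟪q, q⟫ < 1 := convexHull_min h hhalf (hsub (mem_sphere_zero_iff_norm.2 hq))
    rw [real_inner_self_eq_norm_sq, hq] at hqq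
    norm_num at hqq
  · intro h x hx
    rw [mem_sphere_zero_iff_norm] at hx
    by_contra hxK
    obtain ⟨y, hyK, -⟩ := h x hx
    obtain ⟨u, hu, hlt⟩ := exists_unit_forall_inner_lt_one (convex_convexHull ℝ K) hK
      (subset_convexHull ℝ K hyK) hx.le hxK
    obtain ⟨z, hz, hzu⟩ := h u hu
    exact (hlt z (subset_convexHull ℝ K hz)).not_ge hzu

theorem exists_inner_eq_one_of_one_le_inner {P : ℝ → E} {L : ℝ}
    (hcont : ContinuousOn P (Icc 0 L)) (h0 : P 0 = 0) {q : E} {t : ℝ} (ht : t ∈ Icc 0 L)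
    (h1 : 1 ≤ ⟪P t, q⟫) : ∃ s ∈ Icc 0 L, ⟪P s, q⟫ = 1 := by
  have hsub : Icc 0 t ⊆ Icc 0 L := Icc_subset_Icc le_rfl ht.2
  have hmem : (1 : ℝ) ∈ Icc ⟪P 0, q⟫ ⟪P t, q⟫ := ⟨by simp [h0], h1⟩
  obtain ⟨s, hs, hval⟩ :=
    intermediate_value_Icc ht.1 ((hcont.mono hsub).inner continuousOn_const) hmem
  exact ⟨s, hsub hs, hval⟩

theorem forall_exists_inner_eq_one_iff {P : ℝ → E} {L : ℝ}
    (hcont : ContinuousOn P (Icc 0 L)) (h0 : P 0 = 0) :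
    (∀ q : E, ‖q‖ = 1 → ∃ t ∈ Icc 0 L, ⟪P t, q⟫ = 1) ↔
      ∀ q : E, ‖q‖ = 1 → ∃ t ∈ Icc 0 L, 1 ≤ ⟪P t, q⟫ :=
  forall₂_congr fun _ _ =>
    ⟨fun ⟨t, ht, h⟩ => ⟨t, ht, h.ge⟩,
      fun ⟨_, ht, h⟩ => exists_inner_eq_one_of_one_le_inner hcont h0 ht h⟩

end InnerProductSpace

theorem stmt10_general (d : ℕ) (L : ℝ)
    (P : ℝ → EuclideanSpace ℝ (Fin d))
    (hcont : ContinuousOn P (Set.Icc 0 L)) (h0 : P 0 = 0) :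
    ((∀ q : EuclideanSpace ℝ (Fin d), ‖q‖ = 1 →
        ∃ t ∈ Set.Icc (0 : ℝ) L, ⟪P t, q⟫ = 1) ↔
      (∀ q : EuclideanSpace ℝ (Fin d), ‖q‖ = 1 →
        ∃ t ∈ Set.Icc (0 : ℝ) L, 1 ≤ ‖P t‖ ∧ 1 ≤ ⟪P t, q⟫)) ∧
    ((∀ q : EuclideanSpace ℝ (Fin d), ‖q‖ = 1 →
        ∃ t ∈ Set.Icc (0 : ℝ) L, ⟪P t, q⟫ = 1) ↔
      Metric.sphere (0 : EuclideanSpace ℝ (Fin d)) 1 ⊆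
        convexHull ℝ (P '' Set.Icc 0 L)) := by
  have hreach := forall_exists_inner_eq_one_iff hcont h0
  have hhull : IsClosed (convexHull ℝ (P '' Icc 0 L)) :=
    (isCompact_Icc.image_of_continuousOn hcont).convexHull.isClosed
  refine ⟨hreach.trans (forall₂_congr fun q hq => ?_), ?_⟩
  · exact exists_congr fun t => and_congr_right fun _ =>
      (and_iff_right_of_imp (one_le_norm_of_one_le_inner hq)).symm
  · rw [hreach, sphere_subset_convexHull_iff hhull]
    simp only [exists_mem_image]

/-- A continuous path `P` starting at the origin intersects every hyperplane at
distance exactly `1` from the origin iff every point of the unit sphere is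
visible from some point of `P`, iff the unit sphere is contained in the convex
hull of the image of `P`. -/
theorem stmt10 (d : ℕ) (L : ℝ) (hL : 0 ≤ L)
    (P : ℝ → EuclideanSpace ℝ (Fin d))
    (hcont : ContinuousOn P (Set.Icc 0 L)) (h0 : P 0 = 0) :
    ((∀ q : EuclideanSpace ℝ (Fin d), ‖q‖ = 1 →
        ∃ t ∈ Set.Icc (0 : ℝ) L, ⟪P t, q⟫ = 1) ↔
      (∀ q : EuclideanSpace ℝ (Fin d), ‖q‖ = 1 →
        ∃ t ∈ Set.Icc (0 : ℝ) L, 1 ≤ ‖P t‖ ∧ 1 ≤ ⟪P t, q⟫)) ∧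
    ((∀ q : EuclideanSpace ℝ (Fin d), ‖q‖ = 1 →
        ∃ t ∈ Set.Icc (0 : ℝ) L, ⟪P t, q⟫ = 1) ↔
      Metric.sphere (0 : EuclideanSpace ℝ (Fin d)) 1 ⊆
        convexHull ℝ (P '' Set.Icc 0 L)) :=
  stmt10_general d L P hcont h0
end

section
/- Any 1-Lipschitz path P : [0, L] → ℝ^d starting at the origin such that every point of the unit sphere is visible from some point of P must satisfy L ≥ ⌊d/2⌋ · √((d/2)/(16 log(d/2))) for d sufficiently large. -/
open scoped RealInnerProductSpace
open Finset
set_option maxHeartbeats 1000000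


lemma hoeffding_count (k : ℕ) (z : Fin k → ℝ) (s σ2 : ℝ) (hs : 0 < s) (hσ : 0 < σ2)
    (hz : ∑ i, z i ^ 2 ≤ σ2) :
    ((Finset.univ.filter
        (fun ε : Fin k → Bool => s ≤ ∑ i, (if ε i then z i else - z i))).card : ℝ)
      ≤ 2 ^ k * Real.exp (- s ^ 2 / (2 * σ2)) := by
  classical
  set lam : ℝ := s / σ2 with hlam
  have hlampos : 0 < lam := div_pos hs hσ
  set S := Finset.univ.filter
      (fun ε : Fin k → Bool => s ≤ ∑ i, (if ε i then z i else - z i)) with hS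
  have key : ∑ ε : Fin k → Bool, Real.exp (lam * ∑ i, (if ε i then z i else - z i))
      ≤ 2 ^ k * Real.exp (lam ^ 2 * σ2 / 2) := by
    have e2 : ∏ i, ∑ b : Bool, Real.exp (lam * if b then z i else - z i)
        = ∑ ε : Fin k → Bool, ∏ i, Real.exp (lam * if ε i then z i else - z i) :=
      Fintype.prod_sum _
    calc ∑ ε : Fin k → Bool, Real.exp (lam * ∑ i, (if ε i then z i else - z i))
        = ∑ ε : Fin k → Bool, ∏ i, Real.exp (lam * (if ε i then z i else - z i)) := by
          refine Finset.sum_congr rfl (fun ε _ => ?_)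
          rw [Finset.mul_sum, Real.exp_sum]
      _ = ∏ i, ∑ b : Bool, Real.exp (lam * if b then z i else - z i) := e2.symm
      _ = ∏ i, (Real.exp (lam * z i) + Real.exp (- (lam * z i))) := by
          refine Finset.prod_congr rfl (fun i _ => ?_)
          simp [mul_neg]
      _ ≤ ∏ i, 2 * Real.exp ((lam * z i) ^ 2 / 2) := by
          refine Finset.prod_le_prod (fun i _ => by positivity) (fun i _ => ?_)
          have := Real.cosh_le_exp_half_sq (lam * z i)
          rw [Real.cosh_eq] at this
          linarith
      _ = 2 ^ k * Real.exp (∑ i, ((lam * z i) ^ 2 / 2)) := by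
          rw [Finset.prod_mul_distrib, Real.exp_sum]
          simp [Finset.prod_const]
      _ ≤ 2 ^ k * Real.exp (lam ^ 2 * σ2 / 2) := by
          gcongr
          have : ∑ i, ((lam * z i) ^ 2 / 2) = lam ^ 2 * (∑ i, z i ^ 2) / 2 := by
            rw [Finset.mul_sum, Finset.sum_div]
            refine Finset.sum_congr rfl (fun i _ => by ring)
          rw [this]
          have h2 : lam ^ 2 * (∑ i, z i ^ 2) ≤ lam ^ 2 * σ2 := by
            have : (0:ℝ) ≤ lam ^ 2 := sq_nonneg _
            nlinarith
          linarith
  have lower : (S.card : ℝ) * Real.exp (lam * s)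
      ≤ ∑ ε : Fin k → Bool, Real.exp (lam * ∑ i, (if ε i then z i else - z i)) := by
    have h1 : ∀ ε ∈ S, Real.exp (lam * s)
        ≤ Real.exp (lam * ∑ i, (if ε i then z i else - z i)) := by
      intro ε hε
      have := (Finset.mem_filter.1 hε).2
      exact Real.exp_le_exp.2 (by nlinarith)
    calc (S.card : ℝ) * Real.exp (lam * s)
        = ∑ _ε ∈ S, Real.exp (lam * s) := by rw [Finset.sum_const, nsmul_eq_mul]
      _ ≤ ∑ ε ∈ S, Real.exp (lam * ∑ i, (if ε i then z i else - z i)) :=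
          Finset.sum_le_sum h1
      _ ≤ ∑ ε : Fin k → Bool, Real.exp (lam * ∑ i, (if ε i then z i else - z i)) :=
          Finset.sum_le_sum_of_subset_of_nonneg (Finset.filter_subset _ _)
            (fun _ _ _ => (Real.exp_pos _).le)
  have hcard : (S.card : ℝ) ≤ 2 ^ k * Real.exp (lam ^ 2 * σ2 / 2) * Real.exp (- (lam * s)) := by
    have hepos : (0:ℝ) < Real.exp (lam * s) := Real.exp_pos _
    rw [Real.exp_neg]
    have hlk := le_trans lower key
    calc (S.card : ℝ) = (S.card : ℝ) * Real.exp (lam * s) * (Real.exp (lam * s))⁻¹ := by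
          field_simp
      _ ≤ 2 ^ k * Real.exp (lam ^ 2 * σ2 / 2) * (Real.exp (lam * s))⁻¹ := by
          gcongr
  refine hcard.trans (le_of_eq ?_)
  rw [mul_assoc, ← Real.exp_add]
  congr 1
  rw [hlam]
  field_simp
  ring

lemma lemA (d k : ℕ) (hd : 100 ≤ d) (hk : d ≤ 2 * k)
    (L : ℝ) (hL0 : 0 ≤ L)
    (hLup : L < ((d : ℝ) / 2) ^ 2 / 16)
    (P : ℝ → EuclideanSpace ℝ (Fin k))
    (hlip : LipschitzOnWith 1 P (Set.Icc 0 L))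
    (hsee : ∀ q : EuclideanSpace ℝ (Fin k), ‖q‖ = 1 → ∃ t ∈ Set.Icc (0:ℝ) L, 1 ≤ ⟪P t, q⟫)
    (hbdd : ∀ t ∈ Set.Icc (0:ℝ) L, ‖P t‖
      ≤ Real.sqrt (((d:ℝ)/2) / (16 * Real.log ((d:ℝ)/2)))) :
    False := by
  classical
  set x : ℝ := (d : ℝ) / 2 with hxdef
  have hx50 : (50 : ℝ) ≤ x := by
    have : (100 : ℝ) ≤ (d : ℝ) := by exact_mod_cast hd
    rw [hxdef]; linarith
  have hxpos : (0:ℝ) < x := by linarith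
  set lg : ℝ := Real.log x with hlgdef
  have hlg1 : 1 ≤ lg := by
    rw [hlgdef, Real.le_log_iff_exp_le (by linarith)]
    have := Real.exp_one_lt_d9
    linarith
  have hlgpos : 0 < lg := by linarith
  set τ : ℝ := Real.sqrt (x / (16 * lg)) with hτdef
  have hτpos : 0 < τ := Real.sqrt_pos.2 (by positivity)
  have hτsq : τ ^ 2 = x / (16 * lg) := Real.sq_sqrt (by positivity)
  have hk0 : 0 < k := by omega
  have hkx : x ≤ (k : ℝ) := by
    have : (d : ℝ) ≤ 2 * (k : ℝ) := by exact_mod_cast hk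
    rw [hxdef]; linarith
  have hkpos : (0:ℝ) < (k:ℝ) := by positivity
  -- the net
  set n : ℕ := ⌈2 * L⌉₊ with hndef
  set u : ℕ → ℝ := fun j => min ((j:ℝ)/2) L with hudef
  have humem : ∀ j, u j ∈ Set.Icc (0:ℝ) L := by
    intro j
    constructor
    · exact le_min (by positivity) hL0
    · exact min_le_right _ _
  set Z : ℕ → Fin k → ℝ := fun j i => (Real.sqrt k)⁻¹ * P (u j) i with hZdef
  have hsk : (0:ℝ) < Real.sqrt k := Real.sqrt_pos.2 hkpos
  have hZsum : ∀ j, ∑ i, (Z j i) ^ 2 ≤ τ ^ 2 / k := by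
    intro j
    have hnorm : ∑ i, (P (u j) i) ^ 2 = ‖P (u j)‖ ^ 2 := by
      rw [EuclideanSpace.norm_eq, Real.sq_sqrt (by positivity)]
      simp [sq_abs]
    have h1 : ∑ i, (Z j i) ^ 2 = (1 / k) * ∑ i, (P (u j) i) ^ 2 := by
      rw [Finset.mul_sum]
      refine Finset.sum_congr rfl (fun i _ => ?_)
      rw [hZdef]
      rw [mul_pow, ← Real.sqrt_inv, Real.sq_sqrt (by positivity)]
      ring
    rw [h1, hnorm]
    have hb := hbdd (u j) (humem j)
    have hb2 : ‖P (u j)‖ ^ 2 ≤ τ ^ 2 := by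
      have := norm_nonneg (P (u j))
      nlinarith
    rw [div_eq_mul_inv (τ^2), one_div, mul_comm]
    exact mul_le_mul_of_nonneg_right hb2 (by positivity)
  -- the sign vectors
  set q : (Fin k → Bool) → EuclideanSpace ℝ (Fin k) :=
    fun ε => WithLp.toLp 2 (fun i => (Real.sqrt k)⁻¹ * (if ε i then 1 else -1)) with hqdef
  have hqnorm : ∀ ε, ‖q ε‖ = 1 := by
    intro ε
    rw [EuclideanSpace.norm_eq]
    have : ∀ i : Fin k, ‖q ε i‖ ^ 2 = (1:ℝ)/k := by
      intro i
      rw [hqdef]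
      rcases Bool.dichotomy (ε i) with h | h <;>
        simp [h, sq_abs, mul_pow, ← Real.sqrt_inv, Real.sq_sqrt (le_of_lt (by positivity : (0:ℝ) < (k:ℝ)⁻¹)), one_div]
    rw [Finset.sum_congr rfl (fun i _ => this i)]
    simp [Finset.sum_const]
    field_simp
  -- inner product as a sum
  have hinner : ∀ (ε : Fin k → Bool) (j : ℕ),
      ⟪P (u j), q ε⟫ = ∑ i, (if ε i then Z j i else - Z j i) := by
    intro ε j
    rw [show (⟪P (u j), q ε⟫ : ℝ) = ∑ i, P (u j) i * q ε i by
      simp [PiLp.inner_apply, RCLike.inner_apply, conj_trivial]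
      exact Finset.sum_congr rfl (fun i _ => mul_comm _ _)]
    refine Finset.sum_congr rfl (fun i _ => ?_)
    rw [hqdef, hZdef]
    rcases Bool.dichotomy (ε i) with h | h <;> simp [h] <;> ring
  -- coverage of the cube by the net
  have cover : ∀ ε : Fin k → Bool, ∃ j ∈ Finset.range (n+1),
      (1/2 : ℝ) ≤ ∑ i, (if ε i then Z j i else - Z j i) := by
    intro ε
    obtain ⟨t, htmem, htsee⟩ := hsee (q ε) (hqnorm ε)
    set j : ℕ := ⌊2 * t⌋₊ with hjdef
    have ht0 : 0 ≤ t := htmem.1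
    have htL : t ≤ L := htmem.2
    have hjle : (j : ℝ) ≤ 2 * t := Nat.floor_le (by linarith)
    have hjlt : 2 * t < (j : ℝ) + 1 := Nat.lt_floor_add_one _
    have hjn : j ∈ Finset.range (n+1) := by
      rw [Finset.mem_range, Nat.lt_succ_iff]
      have h2L : (2:ℝ) * t ≤ (n : ℝ) := le_trans (by linarith) (Nat.le_ceil (2*L))
      exact_mod_cast hjle.trans h2L
    refine ⟨j, hjn, ?_⟩
    have huj : u j = (j : ℝ) / 2 := min_eq_left (by linarith)
    have hdist : dist t (u j) ≤ 1/2 := by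
      rw [huj, Real.dist_eq, abs_le]
      constructor <;> linarith
    have hPd : ‖P t - P (u j)‖ ≤ 1/2 := by
      have := hlip.dist_le_mul t htmem (u j) (humem j)
      rw [dist_eq_norm] at this
      simpa using this.trans (by simpa using hdist)
    have hip : |⟪P t - P (u j), q ε⟫| ≤ 1/2 := by
      have h1 := abs_real_inner_le_norm (P t - P (u j)) (q ε)
      rw [hqnorm ε] at h1
      calc |⟪P t - P (u j), q ε⟫| ≤ ‖P t - P (u j)‖ * 1 := h1
        _ ≤ 1/2 := by linarith
    have hsub : ⟪P t, q ε⟫ - ⟪P (u j), q ε⟫ = ⟪P t - P (u j), q ε⟫ :=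
      (inner_sub_left _ _ _).symm
    have h2 : (1/2 : ℝ) ≤ ⟪P (u j), q ε⟫ := by
      have := abs_le.1 hip
      have h3 : ⟪P t, q ε⟫ - ⟪P (u j), q ε⟫ ≤ 1/2 := by
        rw [hsub]; exact this.2
      linarith
    rw [← hinner ε j]
    exact h2
  -- counting
  set S : ℕ → Finset (Fin k → Bool) := fun j => Finset.univ.filter
      (fun ε : Fin k → Bool => (1/2:ℝ) ≤ ∑ i, (if ε i then Z j i else - Z j i)) with hSdef
  have hsubset : (Finset.univ : Finset (Fin k → Bool))
      ⊆ (Finset.range (n+1)).biUnion S := by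
    intro ε _
    obtain ⟨j, hj, hle⟩ := cover ε
    exact Finset.mem_biUnion.2 ⟨j, hj, Finset.mem_filter.2 ⟨Finset.mem_univ _, hle⟩⟩
  have hcardle : ((2:ℝ)) ^ k ≤ ∑ j ∈ Finset.range (n+1), ((S j).card : ℝ) := by
    have h1 : (Finset.univ : Finset (Fin k → Bool)).card
        ≤ ∑ j ∈ Finset.range (n+1), (S j).card :=
      le_trans (Finset.card_le_card hsubset) (Finset.card_biUnion_le)
    have h2 : (Finset.univ : Finset (Fin k → Bool)).card = 2 ^ k := by
      simp [Fintype.card_fun]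
    rw [h2] at h1
    calc ((2:ℝ))^k = ((2^k : ℕ) : ℝ) := by push_cast; ring
      _ ≤ _ := by exact_mod_cast h1
  -- per-net-point bound
  have hone : ∀ j, ((S j).card : ℝ) ≤ 2 ^ k * x⁻¹ ^ 2 := by
    intro j
    have hσ : (0:ℝ) < τ^2 / k := by positivity
    have h1 := hoeffding_count k (Z j) (1/2) (τ^2 / k) (by norm_num) hσ (hZsum j)
    refine (h1.trans ?_)
    have hexp : Real.exp (-(1/2)^2/(2*(τ^2/k))) ≤ x⁻¹ ^ 2 := by
      have harg : -(1/2:ℝ)^2/(2*(τ^2/k)) ≤ -(2*lg) := by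
        have hA : 2*(τ^2/(k:ℝ)) = x/(8*lg*(k:ℝ)) := by
          rw [hτsq]; field_simp; ring
        rw [hA, div_le_iff₀ (by positivity)]
        have he2 : -(2*lg) * (x/(8*lg*(k:ℝ))) = -(x/(4*(k:ℝ))) := by
          field_simp; ring
        rw [he2]
        have hx4k : x/(4*(k:ℝ)) ≤ 1/4 := by
          rw [div_le_div_iff₀ (by positivity) (by norm_num)]
          linarith
        have h14 : (-(1/2:ℝ)^2) = -(1/4:ℝ) := by norm_num
        rw [h14]
        linarith
      calc Real.exp (-(1/2)^2/(2*(τ^2/k))) ≤ Real.exp (-(2*lg)) := Real.exp_le_exp.2 harg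
        _ = x⁻¹ ^ 2 := by
          rw [Real.exp_neg, two_mul, Real.exp_add, Real.exp_log hxpos]
          rw [mul_inv, sq]
    gcongr
  -- combine
  have hfinal : ((2:ℝ))^k ≤ ((n:ℝ)+1) * (2^k * x⁻¹^2) := by
    calc ((2:ℝ))^k ≤ ∑ j ∈ Finset.range (n+1), ((S j).card : ℝ) := hcardle
      _ ≤ ∑ _j ∈ Finset.range (n+1), (2^k * x⁻¹^2 : ℝ) :=
          Finset.sum_le_sum (fun j _ => hone j)
      _ = ((n:ℝ)+1) * (2^k * x⁻¹^2) := by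
          rw [Finset.sum_const, nsmul_eq_mul, Finset.card_range]
          push_cast; ring
  have h2kpos : (0:ℝ) < 2^k := by positivity
  have hxx : x^2 ≤ (n:ℝ) + 1 := by
    have h3 : (1:ℝ) ≤ ((n:ℝ)+1) * x⁻¹^2 := by
      rw [show ((n:ℝ)+1) * (2^k * x⁻¹^2) = (((n:ℝ)+1) * x⁻¹^2) * 2^k by ring] at hfinal
      have h' : (1:ℝ) * 2^k ≤ (((n:ℝ)+1) * x⁻¹^2) * 2^k := by
        rw [one_mul]; exact hfinal
      exact le_of_mul_le_mul_right h' h2kpos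
    calc x^2 = x^2 * 1 := by ring
      _ ≤ x^2 * (((n:ℝ)+1) * x⁻¹^2) := mul_le_mul_of_nonneg_left h3 (sq_nonneg x)
      _ = ((n:ℝ)+1) * (x * x⁻¹)^2 := by ring
      _ = (n:ℝ)+1 := by rw [mul_inv_cancel₀ hxpos.ne', one_pow, mul_one]
  have hn2L : (n:ℝ) < 2*L + 1 := by
    have := Nat.ceil_lt_add_one (by positivity : (0:ℝ) ≤ 2*L)
    exact_mod_cast this
  nlinarith [hxx, hn2L, hLup, hx50, sq_nonneg (x - 50)]

lemma lemB (d : ℕ) (hd : 100 ≤ d) :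
    ∀ j : ℕ, ∀ k : ℕ, j ≤ d / 2 → d - d / 2 + j ≤ k →
    ∀ L : ℝ, 0 ≤ L →
    L < ((d / 2 : ℕ) : ℝ) * Real.sqrt (((d:ℝ)/2) / (16 * Real.log ((d:ℝ)/2))) →
    ∀ P : ℝ → EuclideanSpace ℝ (Fin k),
      LipschitzOnWith 1 P (Set.Icc 0 L) →
      (∀ q : EuclideanSpace ℝ (Fin k), ‖q‖ = 1 → ∃ t ∈ Set.Icc (0:ℝ) L, 1 ≤ ⟪P t, q⟫) →
      ∀ s₀, s₀ ∈ Set.Icc (0:ℝ) L → P s₀ = 0 →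
      (∀ t ∈ Set.Icc (0:ℝ) s₀, ‖P t‖ < Real.sqrt (((d:ℝ)/2) / (16 * Real.log ((d:ℝ)/2)))) →
      s₀ + j * Real.sqrt (((d:ℝ)/2) / (16 * Real.log ((d:ℝ)/2))) ≤ L := by
  set x : ℝ := (d : ℝ) / 2 with hxdef
  have hx50 : (50 : ℝ) ≤ x := by
    have : (100 : ℝ) ≤ (d : ℝ) := by exact_mod_cast hd
    rw [hxdef]; linarith
  have hxpos : (0:ℝ) < x := by linarith
  set lg : ℝ := Real.log x with hlgdef
  have hlg1 : 1 ≤ lg := by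
    rw [hlgdef, Real.le_log_iff_exp_le (by linarith)]
    have := Real.exp_one_lt_d9
    linarith
  set τ : ℝ := Real.sqrt (x / (16 * lg)) with hτdef
  have hτpos : 0 < τ := Real.sqrt_pos.2 (by positivity)
  have hτsq : τ ^ 2 = x / (16 * lg) := Real.sq_sqrt (by positivity)
  have hτx : τ ≤ x / 16 := by
    have h1 : τ ^ 2 ≤ x / 16 := by
      rw [hτsq]
      rw [div_le_div_iff₀ (by positivity) (by norm_num)]
      nlinarith
    nlinarith [sq_nonneg (τ - 1)]
  have hmx : ((d / 2 : ℕ) : ℝ) ≤ x := by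
    rw [hxdef]
    rw [le_div_iff₀ (by norm_num : (0:ℝ) < 2)]
    exact_mod_cast Nat.div_mul_le_self d 2
  have hmτ : ((d / 2 : ℕ) : ℝ) * τ ≤ x ^ 2 / 16 := by
    calc ((d / 2 : ℕ) : ℝ) * τ ≤ x * (x/16) := by
          apply mul_le_mul hmx hτx hτpos.le (by linarith)
      _ = x^2/16 := by ring
  intro j
  induction j with
  | zero =>
    intro k _ _ L _ _ P _ _ s₀ hs₀ _ _
    simpa using hs₀.2
  | succ j ih =>
    intro k hj hk L hL0 hLm P hlip hsee s₀ hs₀ hPs₀ hinv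
    -- the set where the path is τ-far
    set A : Set ℝ := {t | t ∈ Set.Icc (0:ℝ) L ∧ τ ≤ ‖P t‖} with hAdef
    have hAne : A.Nonempty := by
      by_contra hA
      refine lemA d k hd (by omega) L hL0 (lt_of_lt_of_le hLm hmτ) P hlip hsee ?_
      intro t ht
      by_contra hle
      exact hA ⟨t, ht, le_of_lt (lt_of_not_ge hle)⟩
    have hAclosed : IsClosed A := by
      have hc : ContinuousOn (fun t => ‖P t‖) (Set.Icc (0:ℝ) L) :=
        hlip.continuousOn.norm
      have : A = Set.Icc (0:ℝ) L ∩ (fun t => ‖P t‖) ⁻¹' (Set.Ici τ) := by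
        ext t
        simp only [hAdef, Set.mem_setOf_eq, Set.mem_inter_iff, Set.mem_preimage,
          Set.mem_Ici]
      rw [this]
      exact hc.preimage_isClosed_of_isClosed isClosed_Icc isClosed_Ici
    have hAbdd : BddBelow A := ⟨0, fun t ht => ht.1.1⟩
    set T : ℝ := sInf A with hTdef
    have hTA : T ∈ A := hAclosed.csInf_mem hAne hAbdd
    have hTmem : T ∈ Set.Icc (0:ℝ) L := hTA.1
    have hTτ : τ ≤ ‖P T‖ := hTA.2
    have hbefore : ∀ t ∈ Set.Icc (0:ℝ) L, t < T → ‖P t‖ < τ := by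
      intro t ht htT
      by_contra hle
      exact absurd
        (csInf_le hAbdd (show t ∈ A from ⟨ht, le_of_not_gt hle⟩))
        (not_le.2 htT)
    -- s₀ < T and length gain
    have hs₀T : s₀ < T := by
      by_contra hle
      have hT0 : T ∈ Set.Icc (0:ℝ) s₀ := ⟨hTmem.1, le_of_not_gt hle⟩
      exact absurd hTτ (not_le.2 (hinv T hT0))
    have hgain : s₀ + τ ≤ T := by
      have h1 : ‖P T - P s₀‖ ≤ dist T s₀ := by
        have := hlip.dist_le_mul T hTmem s₀ hs₀
        rw [dist_eq_norm] at this
        simpa using this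
      rw [hPs₀, sub_zero] at h1
      rw [Real.dist_eq, abs_of_pos (by linarith)] at h1
      linarith
    -- build the projection
    have hPT0 : P T ≠ 0 := by
      intro h
      rw [h, norm_zero] at hTτ
      linarith
    set v : EuclideanSpace ℝ (Fin k) := ‖P T‖⁻¹ • P T with hvdef
    have hPTpos : (0:ℝ) < ‖P T‖ := norm_pos_iff.2 hPT0
    have hvnorm : ‖v‖ = 1 := by
      rw [hvdef, norm_smul, norm_inv, norm_norm, inv_mul_cancel₀ hPTpos.ne']
    have hv0 : v ≠ 0 := by
      intro h
      rw [h, norm_zero] at hvnorm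
      norm_num at hvnorm
    set W : Submodule ℝ (EuclideanSpace ℝ (Fin k)) := (ℝ ∙ v)ᗮ with hWdef
    set k' : ℕ := Module.finrank ℝ W with hk'def
    have hkk' : k' + 1 = k := by
      have h1 : Module.finrank ℝ (ℝ ∙ v) = 1 := finrank_span_singleton hv0
      have h2 := Submodule.finrank_add_finrank_orthogonal (K := ℝ ∙ v)
        (E := EuclideanSpace ℝ (Fin k))
      rw [← hWdef, h1, finrank_euclideanSpace_fin] at h2
      omega
    obtain ⟨e⟩ : Nonempty (W ≃ₗᵢ[ℝ] EuclideanSpace ℝ (Fin k')) :=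
      ⟨(stdOrthonormalBasis ℝ W).repr⟩
    set pr := W.orthogonalProjectionOnto with hprdef
    set P' : ℝ → EuclideanSpace ℝ (Fin k') := fun t => e (pr (P t)) with hP'def
    have hprnorm : ∀ y : EuclideanSpace ℝ (Fin k), ‖(pr y : W)‖ ≤ ‖y‖ := by
      intro y
      have := (W.orthogonalProjectionOnto).le_of_opNorm_le (W.orthogonalProjectionOnto_norm_le) y
      simpa only [one_mul] using this
    have hP'norm : ∀ t, ‖P' t‖ ≤ ‖P t‖ := by
      intro t
      rw [hP'def]
      simp only [LinearIsometryEquiv.norm_map]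
      exact hprnorm _
    have hlip' : LipschitzOnWith 1 P' (Set.Icc 0 L) := by
      rw [lipschitzOnWith_iff_dist_le_mul]
      intro a ha b hb
      have h1 : dist (P' a) (P' b) ≤ dist (P a) (P b) := by
        rw [hP'def]
        simp only
        rw [e.dist_map, dist_eq_norm, dist_eq_norm, ← map_sub]
        exact hprnorm _
      calc dist (P' a) (P' b) ≤ dist (P a) (P b) := h1
        _ ≤ 1 * dist a b := by simpa using hlip.dist_le_mul a ha b hb
    -- the projected path still sees the whole lower-dimensional sphere
    have hsee' : ∀ q' : EuclideanSpace ℝ (Fin k'), ‖q'‖ = 1 →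
        ∃ t ∈ Set.Icc (0:ℝ) L, 1 ≤ ⟪P' t, q'⟫ := by
      intro q' hq'
      set w : W := e.symm q' with hwdef
      have hwnorm : ‖(w : EuclideanSpace ℝ (Fin k))‖ = 1 := by
        rw [Submodule.norm_coe, hwdef, LinearIsometryEquiv.norm_map]
        exact hq'
      obtain ⟨t, htmem, htsee⟩ := hsee (w : EuclideanSpace ℝ (Fin k)) hwnorm
      refine ⟨t, htmem, ?_⟩
      have he1 : (⟪P' t, q'⟫ : ℝ) = ⟪(pr (P t) : EuclideanSpace ℝ (Fin k)),
          (w : EuclideanSpace ℝ (Fin k))⟫ := by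
        rw [hP'def]
        simp only
        rw [show q' = e w by rw [hwdef, LinearIsometryEquiv.apply_symm_apply]]
        rw [LinearIsometryEquiv.inner_map_map]
        exact (Submodule.coe_inner W _ _)
      have he2 : (⟪P t - (pr (P t) : EuclideanSpace ℝ (Fin k)),
          (w : EuclideanSpace ℝ (Fin k))⟫ : ℝ) = 0 := by
        have hmem := Submodule.sub_starProjection_mem_orthogonal (K := W) (P t)
        exact (Submodule.mem_orthogonal' W _).1 hmem _ w.2
      have he3 : (⟪P t, (w : EuclideanSpace ℝ (Fin k))⟫ : ℝ)
          = ⟪(pr (P t) : EuclideanSpace ℝ (Fin k)), (w : EuclideanSpace ℝ (Fin k))⟫ := by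
        have := inner_sub_left (𝕜 := ℝ) (P t) ((pr (P t) : EuclideanSpace ℝ (Fin k))) w
        rw [he2] at this
        linarith [this]
      rw [he1, ← he3]
      exact htsee
    -- the projected path vanishes at time T
    have hP'T0 : P' T = 0 := by
      have hmem : P T ∈ Wᗮ := by
        rw [hWdef, Submodule.orthogonal_orthogonal]
        exact Submodule.mem_span_singleton.2
          ⟨‖P T‖, by rw [hvdef, smul_smul, mul_inv_cancel₀ hPTpos.ne', one_smul]⟩
      rw [hP'def]
      simp only
      rw [Submodule.orthogonalProjectionOnto_apply_of_mem_orthogonal hmem, map_zero]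
    -- invariant for the next stage
    have hinv' : ∀ t ∈ Set.Icc (0:ℝ) T, ‖P' t‖ < τ := by
      intro t ht
      rcases lt_or_eq_of_le ht.2 with h | h
      · exact lt_of_le_of_lt (hP'norm t) (hbefore t ⟨ht.1, le_trans ht.2 hTmem.2⟩ h)
      · rw [h, hP'T0, norm_zero]
        exact hτpos
    have hrec := ih k' (by omega) (by omega) L hL0 hLm P' hlip' hsee' T hTmem hP'T0 hinv'
    push_cast
    push_cast at hrec
    linarith


/-- Main lower bound: for all sufficiently large `d`, any 1-Lipschitz path
`P : [0, L] → ℝ^d` starting at the origin from which every point of the unit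
sphere is visible satisfies `L ≥ ⌊d/2⌋ · √((d/2) / (16 log (d/2)))`;
in particular `L = Ω(d^{3/2} / √(log d))`. -/
theorem stmt14 :
    ∃ N : ℕ, ∀ d : ℕ, N ≤ d → ∀ L : ℝ, 0 ≤ L →
      ∀ P : ℝ → EuclideanSpace ℝ (Fin d),
        LipschitzOnWith 1 P (Set.Icc 0 L) → P 0 = 0 →
        (∀ q : EuclideanSpace ℝ (Fin d), ‖q‖ = 1 →
          ∃ t ∈ Set.Icc (0 : ℝ) L, 1 ≤ ‖P t‖ ∧ 1 ≤ ⟪P t, q⟫) →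
        ((d / 2 : ℕ) : ℝ) * Real.sqrt (((d : ℝ) / 2) / (16 * Real.log ((d : ℝ) / 2))) ≤ L := by
  refine ⟨100, ?_⟩
  intro d hd L hL0 P hlip hP0 hsee
  by_contra hcon
  push_neg at hcon
  have hτpos : 0 < Real.sqrt (((d : ℝ) / 2) / (16 * Real.log ((d : ℝ) / 2))) := by
    apply Real.sqrt_pos.2
    have hx50 : (50 : ℝ) ≤ (d : ℝ) / 2 := by
      have : (100 : ℝ) ≤ (d : ℝ) := by exact_mod_cast hd
      linarith
    have hlg : 0 < Real.log ((d : ℝ) / 2) := Real.log_pos (by linarith)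
    positivity
  have hsee' : ∀ q : EuclideanSpace ℝ (Fin d), ‖q‖ = 1 →
      ∃ t ∈ Set.Icc (0 : ℝ) L, 1 ≤ ⟪P t, q⟫ := by
    intro q hq
    obtain ⟨t, ht, _, h2⟩ := hsee q hq
    exact ⟨t, ht, h2⟩
  have hfin := lemB d hd (d / 2) d le_rfl (by omega) L hL0 hcon P hlip hsee'
    0 ⟨le_rfl, hL0⟩ hP0 ?_
  · linarith
  · intro t ht
    have ht0 : t = 0 := le_antisymm ht.2 ht.1
    rw [ht0, hP0, norm_zero]
    exact hτpos
end
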